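/- arXiv:2601.09080 — 5 statements merged into one kernel-verified Lean document; each statement's English description precedes it below -/
import Mathlib

section
/- Let d be a positive integer and ω = e^(2πi/d). The d-th roots of unity ω^0, ω^1, …, ω^{d−1} are all contained in some regular lattice ℤe₁ + ℤe₂ + e in ℂ (where e₁, e₂ are ℝ-linearly independent complex numbers and e ∈ ℂ) if and only if d ∈ {1, 2, 3, 4, 6}. -/
/-!
If the `d`-th roots of unity lie in a coset `e + Λ` of a lattice `Λ = ℤe₁ + ℤe₂`, the differences
`ω^(k+1) - ω^k = ω^k (ω - 1)` lie in `Λ`, whose `ℚ`-span has dimension at most two. For `ω ≠ 1`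
this makes `1, ω, ω²` linearly dependent over `ℚ`, so `φ(d) = deg Φ_d ≤ 2`, which forces
`d ∈ {1, 2, 3, 4, 6}`. Conversely, when `φ(d) ≤ 2` the monic integer relation `Φ_d(ω) = 0` of
degree at most two puts every power of `ω` in `ℤ + ℤω`, a lattice as soon as `ω` is not real.
-/

open Complex Polynomial Submodule ComplexConjugate

theorem Nat.dvd_twelve_of_totient_le_two {d : ℕ} (hd : 0 < d) (h : d.totient ≤ 2) : d ∣ 12 := by
  refine (Nat.dvd_iff_prime_pow_dvd_dvd 12 d).2 fun p k hp hpk => ?_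
  rcases k.eq_zero_or_pos with rfl | hk
  · simp
  have hφ : (p ^ k).totient ≤ 2 :=
    (Nat.le_of_dvd (Nat.totient_pos.2 hd) (Nat.totient_dvd_of_dvd hpk)).trans h
  have hle : p ^ k ≤ 6 := by
    rw [Nat.totient_prime_pow hp hk] at hφ
    have hpow : p ^ k = p ^ (k - 1) * p := by rw [← pow_succ, Nat.sub_add_cancel hk]
    have := Nat.one_le_pow (k - 1) p hp.pos
    rw [hpow]
    nlinarith [hp.two_le, Nat.sub_add_cancel hp.one_le]
  have hpos : 0 < p ^ k := pow_pos hp.pos k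
  generalize p ^ k = q at hφ hle hpos
  interval_cases q <;> simp_all [Nat.totient_prime Nat.prime_five]

theorem Nat.totient_le_two_iff {d : ℕ} (hd : 0 < d) :
    d.totient ≤ 2 ↔ d ∈ ({1, 2, 3, 4, 6} : Set ℕ) := by
  refine ⟨fun h => ?_, fun h => ?_⟩
  · have := Nat.le_of_dvd (by norm_num) (Nat.dvd_twelve_of_totient_le_two hd h)
    interval_cases d <;> revert h <;> decide
  · rcases h with rfl | rfl | rfl | rfl | rfl <;> decide

theorem natDegree_minpoly_le_two_of_pow_sub_mem_span {K : Type*} [Field K] [CharZero K]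
    {x e e₁ e₂ : K} (hx : x ≠ 1) (h : ∀ k : ℕ, x ^ k - e ∈ span ℤ {e₁, e₂}) :
    (minpoly ℚ x).natDegree ≤ 2 := by
  classical
  by_contra! hdeg
  set v : Fin 3 → K := fun i => x ^ (i : ℕ) * (x - 1)
  have hv : LinearIndependent ℚ v :=
    ((linearIndependent_pow x).comp (Fin.castLE hdeg) (Fin.castLE_injective _)).map'
      (LinearMap.mulRight ℚ (x - 1))
      (LinearMap.ker_eq_bot.2 (mul_left_injective₀ (sub_ne_zero.2 hx)))
  have hsub : Set.range v ≤ (span ℚ (({e₁, e₂} : Finset K) : Set K) : Set K) := by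
    rintro _ ⟨i, rfl⟩
    have hmem : x ^ (i + 1 : ℕ) - e - (x ^ (i : ℕ) - e) ∈ span ℤ {e₁, e₂} := sub_mem (h _) (h _)
    have hmemℚ := span_le_restrictScalars ℤ ℚ _ hmem
    rw [restrictScalars_mem] at hmemℚ
    rw [Finset.coe_pair, SetLike.mem_coe]
    convert hmemℚ using 1
    ring
  have hcard := linearIndependent_le_span' v hv _ hsub
  simp only [Finset.coe_sort_coe, Fintype.card_coe, Cardinal.mk_fintype, Fintype.card_fin,
    Nat.cast_le] at hcard
  exact absurd (hcard.trans Finset.card_le_two) (by norm_num)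

theorem IsPrimitiveRoot.totient_le_two_of_pow_sub_mem_span {K : Type*} [Field K] [CharZero K]
    {ω e e₁ e₂ : K} {d : ℕ} (h : IsPrimitiveRoot ω d) (hd : 0 < d)
    (hmem : ∀ k < d, ω ^ k - e ∈ span ℤ {e₁, e₂}) : d.totient ≤ 2 := by
  obtain rfl | hd1 := Nat.eq_or_lt_of_le hd
  · simp
  rw [← natDegree_cyclotomic d ℚ, cyclotomic_eq_minpoly_rat h hd]
  have hall (k : ℕ) : ω ^ k - e ∈ span ℤ {e₁, e₂} := by
    rw [pow_eq_pow_mod k h.pow_eq_one]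
    exact hmem _ (Nat.mod_lt _ hd)
  exact natDegree_minpoly_le_two_of_pow_sub_mem_span (h.ne_one hd1) hall

theorem pow_mem_span_one_of_aeval_eq_zero {R A : Type*} [CommRing R] [Nontrivial R] [Ring A]
    [Algebra R A] {q : R[X]} (hq : q.Monic) (hdeg : q.degree ≤ 2) {x : A} (hx : aeval x q = 0)
    (k : ℕ) : x ^ k ∈ span R {1, x} := by
  have hr : (X ^ k %ₘ q).degree ≤ 1 :=
    Order.le_of_lt_succ ((degree_modByMonic_lt _ hq).trans_le hdeg)
  rw [← aeval_X_pow (R := R), ← aeval_modByMonic_eq_self_of_root hx,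
    eq_X_add_C_of_degree_le_one hr, mem_span_pair]
  exact ⟨(X ^ k %ₘ q).coeff 0, (X ^ k %ₘ q).coeff 1, by simp [Algebra.smul_def, add_comm]⟩

theorem Complex.linearIndependent_one_of_im_ne_zero {z : ℂ} (hz : z.im ≠ 0) :
    LinearIndependent ℝ ![1, z] := by
  refine LinearIndependent.pair_iff.2 fun s t hst => ?_
  have ht : t = 0 := by simpa [hz] using congrArg Complex.im hst
  subst ht
  simpa using hst

theorem IsPrimitiveRoot.im_ne_zero {ω : ℂ} {d : ℕ} (h : IsPrimitiveRoot ω d) (hd : 2 < d) :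
    ω.im ≠ 0 := by
  intro him
  have hsq : ω ^ 2 = 1 :=
    calc ω ^ 2 = conj ω * ω := by rw [conj_eq_iff_im.2 him, sq]
      _ = 1 := by
        rw [← normSq_eq_conj_mul_self, normSq_eq_norm_sq, h.norm'_eq_one (by omega)]
        simp
  exact absurd (Nat.le_of_dvd two_pos (h.dvd_of_pow_eq_one 2 hsq)) (by omega)

theorem IsPrimitiveRoot.exists_lattice_of_totient_le_two {ω : ℂ} {d : ℕ}
    (h : IsPrimitiveRoot ω d) (hd : 0 < d) (hφ : d.totient ≤ 2) :
    ∃ e e₁ e₂ : ℂ, LinearIndependent ℝ ![e₁, e₂] ∧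
      ∀ k : ℕ, ∃ m n : ℤ, ω ^ k = (m : ℂ) * e₁ + (n : ℂ) * e₂ + e := by
  rcases le_or_gt d 2 with hd2 | hd2
  · obtain ⟨s, rfl⟩ : ∃ s : ℤ, ω = s := by
      interval_cases d
      · exact ⟨1, by simpa using IsPrimitiveRoot.one_right_iff.1 h⟩
      · exact ⟨-1, by simpa using h.eq_neg_one_of_two_right⟩
    refine ⟨0, 1, I, linearIndependent_one_of_im_ne_zero (by simp), fun k => ⟨s ^ k, 0, ?_⟩⟩
    push_cast
    ring
  · refine ⟨0, 1, ω, linearIndependent_one_of_im_ne_zero (h.im_ne_zero hd2), fun k => ?_⟩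
    have hroot : aeval ω (cyclotomic d ℤ) = 0 := by
      simpa [aeval_def, eval₂_eq_eval_map, IsRoot.def] using h.isRoot_cyclotomic hd
    have hdeg : (cyclotomic d ℤ).degree ≤ 2 := by
      rw [degree_cyclotomic]
      exact_mod_cast hφ
    obtain ⟨m, n, hmn⟩ :=
      mem_span_pair.1 (pow_mem_span_one_of_aeval_eq_zero (cyclotomic.monic d ℤ) hdeg hroot k)
    exact ⟨m, n, by simp [← hmn, zsmul_eq_mul]⟩

theorem roots_of_unity_in_regular_lattice_iff (d : ℕ) (hd : 0 < d) (ω : ℂ)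
    (hω : ω = Complex.exp (2 * Real.pi * I / d)) :
    (∃ e e₁ e₂ : ℂ, LinearIndependent ℝ ![e₁, e₂] ∧
      ∀ k : ℕ, k < d → ∃ m n : ℤ, ω ^ k = (m : ℂ) * e₁ + (n : ℂ) * e₂ + e) ↔
    d ∈ ({1, 2, 3, 4, 6} : Set ℕ) := by
  have h : IsPrimitiveRoot ω d := hω ▸ Complex.isPrimitiveRoot_exp d hd.ne'
  rw [← Nat.totient_le_two_iff hd]
  constructor
  · rintro ⟨e, e₁, e₂, -, hmem⟩
    have hspan : ∀ k < d, ω ^ k - e ∈ span ℤ {e₁, e₂} := fun k hk => by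
      obtain ⟨m, n, hmn⟩ := hmem k hk
      exact mem_span_pair.2 ⟨m, n, by rw [hmn]; simp [zsmul_eq_mul]⟩
    exact h.totient_le_two_of_pow_sub_mem_span hd hspan
  · intro hφ
    obtain ⟨e, e₁, e₂, hli, hmem⟩ := h.exists_lattice_of_totient_le_two hd hφ
    exact ⟨e, e₁, e₂, hli, fun k _ => hmem k⟩
end

section
/- Let d > 4 be an integer, ω = e^(2πi/d), and suppose the points ω^0, …, ω^{d−1} all lie in a regular lattice ℤe₁ + ℤe₂ + e in ℂ. Then each ω^k lies in the ℚ-linear span of {1, ω, ω²}, hence [ℚ(ω) : ℚ] ≤ 3. -/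
open Complex IntermediateField

theorem lattice_forces_degree_le_three (d : ℕ) (hd : 4 < d) (ω : ℂ)
    (hω : ω = Complex.exp (2 * Real.pi * I / d))
    (e e₁ e₂ : ℂ) (hind : LinearIndependent ℝ ![e₁, e₂])
    (hlat : ∀ k : ℕ, k < d → ∃ m n : ℤ, ω ^ k = (m : ℂ) * e₁ + (n : ℂ) * e₂ + e) :
    (∀ k : ℕ, k < d → ω ^ k ∈ Submodule.span ℚ ({1, ω, ω ^ 2} : Set ℂ)) ∧
    Module.rank ℚ (IntermediateField.adjoin ℚ ({ω} : Set ℂ)) ≤ 3 := by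
  have hd5 : (5 : ℝ) ≤ (d : ℝ) := by exact_mod_cast hd
  -- imaginary part of ω is positive
  have hIm : 0 < ω.im := by
    have h1 : ω = Complex.exp (((2 * Real.pi / d : ℝ) : ℂ) * I) := by
      rw [hω]; congr 1; push_cast; ring
    have h2 : ω.im = Real.sin (2 * Real.pi / d) := by
      rw [h1, Complex.exp_ofReal_mul_I_im]
    rw [h2]
    apply Real.sin_pos_of_pos_of_lt_pi
    · positivity
    · have : 2 * Real.pi / d ≤ 2 * Real.pi / 5 := by
        apply div_le_div_of_nonneg_left (by positivity) (by norm_num) hd5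
      have hπ : 2 * Real.pi / 5 < Real.pi := by
        nlinarith [Real.pi_pos]
      linarith
  have hω1 : ω ≠ 1 := by
    intro h; rw [h] at hIm; simp at hIm
  have hωm1 : ω - 1 ≠ 0 := sub_ne_zero.mpr hω1
  -- linear independence of ω - 1 and ω^2 - 1 over ℝ
  have hLI : ∀ a b : ℝ, (a : ℂ) * (ω - 1) + (b : ℂ) * (ω ^ 2 - 1) = 0 → a = 0 ∧ b = 0 := by
    intro a b hab
    have h : (ω - 1) * ((a : ℂ) + (b : ℂ) * (ω + 1)) = 0 := by ring_nf; linear_combination hab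
    have h2 : (a : ℂ) + (b : ℂ) * (ω + 1) = 0 := by
      rcases mul_eq_zero.mp h with h | h
      · exact absurd h hωm1
      · exact h
    have him := congrArg Complex.im h2
    simp [Complex.add_im, Complex.mul_im] at him
    have hb : b = 0 := by
      rcases him with h | h
      · exact h
      · exact absurd h (ne_of_gt hIm)
    subst hb
    have hre := congrArg Complex.re h2
    simp at hre
    exact ⟨hre, rfl⟩
  -- lattice data
  obtain ⟨m0, n0, h0⟩ := hlat 0 (by omega)
  obtain ⟨m1, n1, h1⟩ := hlat 1 (by omega)
  obtain ⟨m2, n2, h2⟩ := hlat 2 (by omega)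
  set a₁ : ℤ := m1 - m0 with ha₁
  set b₁ : ℤ := n1 - n0 with hb₁
  set a₂ : ℤ := m2 - m0 with ha₂
  set b₂ : ℤ := n2 - n0 with hb₂
  have E1 : ω - 1 = (a₁ : ℂ) * e₁ + (b₁ : ℂ) * e₂ := by
    have := h1; have := h0; push_cast [ha₁, hb₁]
    simp only [pow_one] at h1
    simp only [pow_zero] at h0
    linear_combination h1 - h0
  have E2 : ω ^ 2 - 1 = (a₂ : ℂ) * e₁ + (b₂ : ℂ) * e₂ := by
    push_cast [ha₂, hb₂]
    simp only [pow_zero] at h0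
    linear_combination h2 - h0
  -- determinant is nonzero
  set D : ℤ := a₁ * b₂ - a₂ * b₁ with hD
  have hDne : D ≠ 0 := by
    intro hD0
    have hcomb : ((b₂ : ℝ) : ℂ) * (ω - 1) + ((-b₁ : ℝ) : ℂ) * (ω ^ 2 - 1) = 0 := by
      push_cast
      rw [E1, E2]
      have : (a₁ : ℂ) * b₂ - a₂ * b₁ = 0 := by exact_mod_cast congrArg (Int.cast : ℤ → ℂ) hD0
      linear_combination e₁ * this
    obtain ⟨hb2, hb1⟩ := hLI _ _ hcomb
    have hb1' : (b₁ : ℝ) = 0 := by linarith [neg_eq_zero.mp hb1]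
    have hb1z : b₁ = 0 := by exact_mod_cast hb1'
    have hb2z : b₂ = 0 := by exact_mod_cast hb2
    have hcomb2 : ((a₂ : ℝ) : ℂ) * (ω - 1) + ((-a₁ : ℝ) : ℂ) * (ω ^ 2 - 1) = 0 := by
      push_cast
      rw [E1, E2, hb1z, hb2z]
      push_cast
      ring
    obtain ⟨ha2, ha1⟩ := hLI _ _ hcomb2
    have ha1z : a₁ = 0 := by
      have : (a₁ : ℝ) = 0 := by linarith [neg_eq_zero.mp ha1]
      exact_mod_cast this
    apply hωm1
    rw [E1, ha1z, hb1z]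
    push_cast; ring
  have hDC : (D : ℂ) ≠ 0 := by exact_mod_cast hDne
  -- main representation
  have hrep : ∀ k : ℕ, k < d → ∃ p q r : ℚ, ω ^ k = (r : ℂ) + (p : ℂ) * ω + (q : ℂ) * ω ^ 2 := by
    intro k hk
    obtain ⟨m, n, hmn⟩ := hlat k hk
    set M : ℤ := m - m0 with hM
    set N : ℤ := n - n0 with hN
    have E3 : ω ^ k - 1 = (M : ℂ) * e₁ + (N : ℂ) * e₂ := by
      push_cast [hM, hN]
      simp only [pow_zero] at h0
      linear_combination hmn - h0
    refine ⟨(M * b₂ - N * a₂) / D, (N * a₁ - M * b₁) / D,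
      1 - (M * b₂ - N * a₂) / D - (N * a₁ - M * b₁) / D, ?_⟩
    have key : (D : ℂ) * (ω ^ k - 1) =
        ((M : ℂ) * b₂ - N * a₂) * (ω - 1) + ((N : ℂ) * a₁ - M * b₁) * (ω ^ 2 - 1) := by
      rw [E1, E2, E3]
      have : (D : ℂ) = (a₁ : ℂ) * b₂ - a₂ * b₁ := by push_cast [hD]; ring
      rw [this]; ring
    push_cast
    field_simp
    linear_combination key
  refine ⟨?_, ?_⟩
  · intro k hk
    obtain ⟨p, q, r, hpqr⟩ := hrep k hk
    rw [hpqr]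
    have m1 : (1 : ℂ) ∈ Submodule.span ℚ ({1, ω, ω ^ 2} : Set ℂ) :=
      Submodule.subset_span (by simp)
    have m2 : ω ∈ Submodule.span ℚ ({1, ω, ω ^ 2} : Set ℂ) :=
      Submodule.subset_span (by simp)
    have m3 : ω ^ 2 ∈ Submodule.span ℚ ({1, ω, ω ^ 2} : Set ℂ) :=
      Submodule.subset_span (by simp)
    have : (r : ℂ) + (p : ℂ) * ω + (q : ℂ) * ω ^ 2 = r • (1 : ℂ) + p • ω + q • ω ^ 2 := by
      simp [Rat.smul_def]
    rw [this]
    exact Submodule.add_mem _ (Submodule.add_mem _ (Submodule.smul_mem _ r m1)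
      (Submodule.smul_mem _ p m2)) (Submodule.smul_mem _ q m3)
  · obtain ⟨p, q, r, hpqr⟩ := hrep 3 (by omega)
    set P : Polynomial ℚ := Polynomial.X ^ 3 -
      (Polynomial.C q * Polynomial.X ^ 2 + Polynomial.C p * Polynomial.X + Polynomial.C r) with hP
    have hmon : P.Monic := by
      have : P = Polynomial.X ^ (2 + 1) -
          (Polynomial.C q * Polynomial.X ^ 2 + Polynomial.C p * Polynomial.X + Polynomial.C r) := by
        rw [hP]
      rw [this]
      exact Polynomial.monic_X_pow_sub (lt_of_le_of_lt Polynomial.degree_quadratic_le (by norm_num))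
    have haev : Polynomial.aeval ω P = 0 := by
      simp [hP, Polynomial.aeval_def]
      rw [hpqr]; push_cast; ring
    have hint : IsIntegral ℚ ω := ⟨P, hmon, by rwa [← Polynomial.aeval_def]⟩
    have hPdeg : P.degree ≤ 3 := by
      apply le_trans (Polynomial.degree_sub_le _ _)
      simp only [max_le_iff]
      constructor
      · exact le_of_eq (Polynomial.degree_X_pow 3)
      · exact le_trans Polynomial.degree_quadratic_le (by norm_num)
    have hmindeg : (minpoly ℚ ω).natDegree ≤ 3 := by
      rw [Polynomial.natDegree_le_iff_degree_le]
      exact le_trans (minpoly.degree_le_of_ne_zero ℚ ω hmon.ne_zero haev) hPdeg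
    haveI : FiniteDimensional ℚ (IntermediateField.adjoin ℚ ({ω} : Set ℂ)) :=
      IntermediateField.adjoin.finiteDimensional hint
    have hfr : Module.finrank ℚ (IntermediateField.adjoin ℚ ({ω} : Set ℂ)) =
        (minpoly ℚ ω).natDegree := IntermediateField.adjoin.finrank hint
    rw [← Module.finrank_eq_rank]
    rw [hfr]
    exact_mod_cast hmindeg
end

section
/- Let d > 1, ω = e^(2πi/d), β ∈ ℂ, and let U_γ denote the Weyl operator (U_γ f)(z) = e^{−|γ|²/2 − conj(γ)z} f(z+γ). Suppose h is an entire function whose Taylor coefficients a_j vanish for all j not divisible by d (so h(ωz) = h(z)), and suppose P₀(U_{−β} h) = 0, where P₀ g(z) = (1/d) Σ_{m=0}^{d−1} g(ω^m z). Then Σ_{m=0}^{d−1} (U_{−βω^{−m}} h)(z) = 0 for all z ∈ ℂ. -/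
/-!
Because `|ω| = 1` and `h` is invariant under rotation by `ω`, each term satisfies
`(U_{-βω^{-m}} h)(z) = (U_{-β} h)(ω^m z)`, so the sum is `d · P₀(U_{-β} h)(z) = 0`.
-/

open Complex

noncomputable def WeylOp (β : ℂ) (f : ℂ → ℂ) : ℂ → ℂ :=
  fun z => Complex.exp (-((‖β‖ : ℂ) ^ 2) / 2 - (starRingEnd ℂ) β * z) * f (z + β)

theorem apply_pow_mul_eq_of_apply_mul_eq {M α : Type*} [Monoid M] {f : M → α} {u : M}
    (hf : ∀ z, f (u * z) = f z) (m : ℕ) (z : M) : f (u ^ m * z) = f z := by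
  induction m with
  | zero => rw [pow_zero, one_mul]
  | succ n ih => rw [pow_succ', mul_assoc, hf, ih]

theorem norm_exp_two_pi_I_div (d : ℕ) : ‖exp (2 * Real.pi * I / d)‖ = 1 := by
  rw [norm_exp, Real.exp_eq_one_iff]
  simp [div_re]

theorem weylOp_mul_inv_apply {u γ : ℂ} {h : ℂ → ℂ} (hu : ‖u‖ = 1)
    (hinv : ∀ z, h (u * z) = h z) (z : ℂ) :
    WeylOp (γ * u⁻¹) h z = WeylOp γ h (u * z) := by
  have hu0 : u ≠ 0 := norm_ne_zero_iff.1 (hu ▸ one_ne_zero)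
  have hconj : (starRingEnd ℂ) u⁻¹ = u := by
    have hconj_u : (starRingEnd ℂ) u = u⁻¹ := by simp [inv_def, normSq_eq_norm_sq, hu]
    rw [map_inv₀, hconj_u, inv_inv]
  have hnorm : ‖γ * u⁻¹‖ = ‖γ‖ := by rw [norm_mul, norm_inv, hu, inv_one, mul_one]
  have harg : h (z + γ * u⁻¹) = h (u * z + γ) := by
    rw [← hinv, mul_add, mul_left_comm, mul_inv_cancel₀ hu0, mul_one]
  simp only [WeylOp, hnorm, harg, map_mul, hconj]
  ring_nf

theorem weyl_sum_vanishes_general (d : ℕ) (ω : ℂ)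
    (hω : ω = Complex.exp (2 * Real.pi * I / d)) (β : ℂ)
    (h : ℂ → ℂ)
    (hinv : ∀ z : ℂ, h (ω * z) = h z)
    (hP0 : ∀ z : ℂ, (d : ℂ)⁻¹ * ∑ m ∈ Finset.range d, WeylOp (-β) h (ω ^ m * z) = 0) :
    ∀ z : ℂ, ∑ m ∈ Finset.range d, WeylOp (-β * ω ^ (-(m : ℤ))) h z = 0 := by
  intro z
  have hω1 : ‖ω‖ = 1 := hω ▸ norm_exp_two_pi_I_div d
  have hterm (m : ℕ) : WeylOp (-β * ω ^ (-(m : ℤ))) h z = WeylOp (-β) h (ω ^ m * z) := by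
    rw [zpow_neg, zpow_natCast]
    exact weylOp_mul_inv_apply (by rw [norm_pow, hω1, one_pow])
      (apply_pow_mul_eq_of_apply_mul_eq hinv m) z
  rw [Finset.sum_congr rfl fun m _ => hterm m]
  rcases mul_eq_zero.1 (hP0 z) with hd | hsum
  · -- `(0 : ℂ)⁻¹ = 0`, so here `d = 0` and the sum is empty
    obtain rfl : d = 0 := by exact_mod_cast inv_eq_zero.1 hd
    exact Finset.sum_range_zero _
  · exact hsum

theorem weyl_sum_vanishes (d : ℕ) (hd : 1 < d) (ω : ℂ)
    (hω : ω = Complex.exp (2 * Real.pi * I / d)) (β : ℂ)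
    (h : ℂ → ℂ) (hent : Differentiable ℂ h)
    (hinv : ∀ z : ℂ, h (ω * z) = h z)
    (hP0 : ∀ z : ℂ, (d : ℂ)⁻¹ * ∑ m ∈ Finset.range d, WeylOp (-β) h (ω ^ m * z) = 0) :
    ∀ z : ℂ, ∑ m ∈ Finset.range d, WeylOp (-β * ω ^ (-(m : ℤ))) h z = 0 :=
  weyl_sum_vanishes_general d ω hω β h hinv hP0
end

section
/- Let f be a nonzero entire function in the Fock space F² and β ∈ ℂ nonzero. Then the two functions U_β f and U_{−β} f are linearly independent in F², where (U_γ f)(z) = e^{−|γ|²/2 − conj(γ)z} f(z+γ). -/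
open Complex MeasureTheory

/-- Membership in the Fock space `F²`. -/
def MemFock (f : ℂ → ℂ) : Prop :=
  Differentiable ℂ f ∧
    Integrable (fun z : ℂ => ‖f z‖ ^ 2 * Real.exp (-‖z‖ ^ 2)) volume

/-!
The Fock density `ρ(z) = |f z|² e^{-|z|²}` of `U_γ f` is the translate by `γ` of that of `f`, so a
relation `c₀ U_β f + c₁ U_{-β} f = 0` gives `|c₀|² ρ(x + 2β) = |c₁|² ρ(x)`. If, say,
`|c₁| ≤ |c₀|` and `c₀ ≠ 0`, then `ρ` does not decrease under translation by `-2β`; a superlevel set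
of the continuous function `ρ` is then an open set stable under that translation, so it contains
infinitely many disjoint congruent balls and has infinite measure, which contradicts the
integrability of `ρ`. Hence `c₀ = 0`, and then `c₁ = 0` because `ρ ≠ 0`.
-/

open Metric Function

noncomputable def fockDensity (f : ℂ → ℂ) (z : ℂ) : ℝ :=
  ‖f z‖ ^ 2 * Real.exp (-‖z‖ ^ 2)

theorem fockDensity_smul (c : ℂ) (f : ℂ → ℂ) (z : ℂ) :
    fockDensity (c • f) z = ‖c‖ ^ 2 * fockDensity f z := by
  simp only [fockDensity, Pi.smul_apply, smul_eq_mul, norm_mul, mul_pow, mul_assoc]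

theorem fockDensity_weylOp (γ : ℂ) (f : ℂ → ℂ) (z : ℂ) :
    fockDensity (WeylOp γ f) z = fockDensity f (z + γ) := by
  set w := -((‖γ‖ : ℂ) ^ 2) / 2 - (starRingEnd ℂ) γ * z
  have hw : 2 * w.re - ‖z‖ ^ 2 = -‖z + γ‖ ^ 2 := by
    simp only [w, ← ofReal_pow, Complex.sq_norm, normSq_apply, ofReal_add, ofReal_mul, neg_add_rev,
      sub_re, div_ofNat_re, add_re, neg_re, mul_re, ofReal_re, ofReal_im, mul_zero, sub_zero,
      conj_re, conj_im, neg_mul, sub_neg_eq_add, add_im]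
    ring
  calc fockDensity (WeylOp γ f) z = ‖f (z + γ)‖ ^ 2 * (Real.exp w.re ^ 2 * Real.exp (-‖z‖ ^ 2)) := by
        simp only [fockDensity, WeylOp, norm_mul, mul_pow, Complex.norm_exp, w]; ring
    _ = fockDensity f (z + γ) := by
        rw [fockDensity, ← Real.exp_nat_mul, ← Real.exp_add, Nat.cast_ofNat, ← sub_eq_add_neg, hw]

section Translates

variable {E : Type*} [NormedAddCommGroup E] [NormedSpace ℝ E] [MeasurableSpace E] [BorelSpace E]
  {μ : Measure E} [μ.IsAddLeftInvariant] [μ.IsOpenPosMeasure]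

theorem IsOpen.measure_eq_top_of_add_mem {S : Set E} {p : E} (hS : IsOpen S) (hne : S.Nonempty)
    (hp : p ≠ 0) (hadd : ∀ x ∈ S, x + p ∈ S) : μ S = ⊤ := by
  obtain ⟨x, hx⟩ := hne
  obtain ⟨ε, hε, hball⟩ := Metric.isOpen_iff.mp hS x hx
  set r := min ε (‖p‖ / 2)
  have hr : 0 < r := lt_min hε (by positivity)
  have hadd_nsmul (n : ℕ) : ∀ y ∈ S, y + n • p ∈ S := by
    induction n with
    | zero => simp
    | succ n ih => exact fun y hy => by simpa [succ_nsmul, add_assoc] using hadd _ (ih y hy)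
  let B : ℕ → Set E := fun n => ball (x + n • p) r
  have hBS (n : ℕ) : B n ⊆ S := by
    intro y hy
    have hy' : y - n • p ∈ ball x ε := by
      rw [mem_ball, dist_eq_norm] at hy ⊢
      calc ‖y - n • p - x‖ = ‖y - (x + n • p)‖ := by congr 1; abel
        _ < ε := hy.trans_le (min_le_left _ _)
    simpa using hadd_nsmul n _ (hball hy')
  have hdisj : Pairwise (Disjoint on B) := by
    refine (pairwise_disjoint_on B).mpr fun m n hmn => Metric.ball_disjoint_ball ?_
    obtain ⟨k, rfl⟩ := Nat.exists_eq_add_of_lt hmn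
    have hk : ‖p‖ ≤ ‖(k + 1) • p‖ := by
      rw [RCLike.norm_nsmul ℝ, nsmul_eq_mul, Nat.cast_add_one]
      nlinarith [norm_nonneg p, (k.cast_nonneg : (0 : ℝ) ≤ k)]
    calc r + r ≤ ‖p‖ := by linarith [min_le_right ε (‖p‖ / 2)]
      _ ≤ dist (x + m • p) (x + (m + k + 1) • p) := by
        rwa [dist_comm, dist_eq_norm, add_sub_add_left_eq_sub, add_assoc, add_nsmul,
          add_sub_cancel_left]
  have hμB (n : ℕ) : μ (B n) = μ (ball x r) := by
    simpa [Metric.preimage_add_left_ball] using measure_preimage_add μ (-(n • p)) (ball x r)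
  refine top_unique ?_
  calc ⊤ = ∑' _ : ℕ, μ (ball x r) :=
        (ENNReal.tsum_const_eq_top_of_ne_zero (measure_ball_pos μ x hr).ne').symm
    _ = μ (⋃ n, B n) := by rw [measure_iUnion hdisj fun _ => measurableSet_ball]; simp only [hμB]
    _ ≤ μ S := measure_mono (Set.iUnion_subset hBS)

theorem MeasureTheory.Integrable.eq_zero_of_norm_le_norm_add {F : Type*} [NormedAddCommGroup F]
    {g : E → F} {p : E} (hint : Integrable g μ) (hg : Continuous g) (hp : p ≠ 0)
    (hmono : ∀ x, ‖g x‖ ≤ ‖g (x + p)‖) : g = 0 := by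
  by_contra hne
  obtain ⟨x₀, hx₀⟩ := ne_iff.mp hne
  set c := ‖g x₀‖ / 2
  have hc : 0 < c := by simpa [c] using hx₀
  have hS : μ {x | c < ‖g x‖} = ⊤ :=
    (isOpen_lt continuous_const hg.norm).measure_eq_top_of_add_mem ⟨x₀, by simpa [c] using hx₀⟩ hp
      fun x hx => hx.trans_le (hmono x)
  have hfin : μ {x | c ≤ ‖g x‖} < ⊤ := hint.measure_norm_ge_lt_top hc
  exact hfin.ne (top_unique (hS ▸ measure_mono fun x (hx : c < ‖g x‖) => hx.le))

theorem eq_zero_of_mul_comp_add_eq_mul {g : E → ℝ} {p : E} {a b : ℝ} (hint : Integrable g μ)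
    (hg : Continuous g) (hgne : g ≠ 0) (hp : p ≠ 0) (ha : 0 ≤ a) (hb : 0 ≤ b)
    (h : ∀ x, a * g (x + p) = b * g x) : a = 0 ∧ b = 0 := by
  wlog hba : b ≤ a generalizing a b p with H
  · exact (H (neg_ne_zero.mpr hp) hb ha (fun x => by simpa [sub_eq_add_neg] using (h (x - p)).symm)
      (le_of_not_ge hba)).symm
  have ha0 : a = 0 := by
    by_contra ha0
    refine hgne (hint.eq_zero_of_norm_le_norm_add hg (neg_ne_zero.mpr hp) fun x => ?_)
    have hx : a * ‖g x‖ = b * ‖g (x + -p)‖ := by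
      simpa [abs_of_nonneg ha, abs_of_nonneg hb] using congrArg norm (h (x + -p))
    have : a * ‖g x‖ ≤ a * ‖g (x + -p)‖ := hx ▸ mul_le_mul_of_nonneg_right hba (norm_nonneg _)
    exact le_of_mul_le_mul_left this (lt_of_le_of_ne ha (Ne.symm ha0))
  obtain ⟨x, hx⟩ := ne_iff.mp hgne
  have hbx : b * g x = 0 := by simpa [ha0] using (h x).symm
  exact ⟨ha0, (mul_eq_zero.mp hbx).resolve_right hx⟩

end Translates

theorem hrt_two_opposite_points (f : ℂ → ℂ) (hf : MemFock f) (hfne : ∃ z, f z ≠ 0)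
    (β : ℂ) (hβ : β ≠ 0) :
    ∀ c₀ c₁ : ℂ, (∀ z : ℂ, c₀ * WeylOp β f z + c₁ * WeylOp (-β) f z = 0) →
      c₀ = 0 ∧ c₁ = 0 := by
  intro c₀ c₁ h
  have hrel : c₀ • WeylOp β f = (-c₁) • WeylOp (-β) f :=
    funext fun z => by simpa [neg_mul, eq_neg_iff_add_eq_zero] using h z
  have hdens (x : ℂ) : ‖c₀‖ ^ 2 * fockDensity f (x + 2 * β) = ‖c₁‖ ^ 2 * fockDensity f x := by
    have := congrFun (congrArg fockDensity hrel) (x + β)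
    rwa [fockDensity_smul, fockDensity_smul, fockDensity_weylOp, fockDensity_weylOp, norm_neg,
      add_neg_cancel_right, add_assoc, ← two_mul] at this
  have hcont : Continuous (fockDensity f) := by
    have := hf.1.continuous
    unfold fockDensity
    fun_prop
  obtain ⟨z₀, hz₀⟩ := hfne
  have hne : fockDensity f ≠ 0 := ne_iff.mpr ⟨z₀, by simp [fockDensity, hz₀]⟩
  obtain ⟨h₀, h₁⟩ := eq_zero_of_mul_comp_add_eq_mul hf.2 hcont hne (by simpa using hβ)
    (sq_nonneg _) (sq_nonneg _) hdens
  exact ⟨by simpa using h₀, by simpa using h₁⟩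
end

section
/- Let f ∈ F² (the Fock space) with Taylor coefficients a_j at the origin, and suppose a_j = 0 for all even j, and additionally (U_β f)(z) has vanishing Taylor coefficients at 0 for all odd indices for some β ∈ ℂ, where U_β f(z) = e^{−|β|²/2 − conj(β)z} f(z+β). Assume the two-point HRT property: for every nonzero g ∈ F² and distinct λ₀, λ₁ ∈ ℂ, the functions U_{λ₀}g and U_{λ₁}g are linearly independent. Then f = 0. -/
open Complex MeasureTheory

theorem hedenmalm_theorem_A (f : ℂ → ℂ) (hf : MemFock f)
    (a b : ℕ → ℂ) (β : ℂ)
    (ha : ∀ z : ℂ, HasSum (fun j : ℕ => a j * z ^ j) (f z))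
    (hb : ∀ z : ℂ, HasSum (fun j : ℕ => b j * z ^ j) (WeylOp β f z))
    (haEven : ∀ j : ℕ, Even j → a j = 0)
    (hbOdd : ∀ j : ℕ, Odd j → b j = 0)
    (HRT2 : ∀ g : ℂ → ℂ, MemFock g → (∃ z, g z ≠ 0) →
      ∀ lam0 lam1 : ℂ, lam0 ≠ lam1 →
        ∀ c₀ c₁ : ℂ, (∀ z : ℂ, c₀ * WeylOp lam0 g z + c₁ * WeylOp lam1 g z = 0) →
          c₀ = 0 ∧ c₁ = 0) :
    ∀ z : ℂ, f z = 0 := by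
  -- f is odd
  have hOdd : ∀ z : ℂ, f (-z) = -f z := by
    intro z
    have h1 : HasSum (fun j : ℕ => a j * (-z) ^ j) (f (-z)) := ha (-z)
    have h2 : (fun j : ℕ => a j * (-z) ^ j) = fun j : ℕ => -(a j * z ^ j) := by
      funext j
      rcases Nat.even_or_odd j with hj | hj
      · rw [haEven j hj]; ring
      · rw [hj.neg_pow]; ring
    rw [h2] at h1
    exact h1.unique (ha z).neg
  -- WeylOp β f is even
  have hEven : ∀ z : ℂ, WeylOp β f (-z) = WeylOp β f z := by
    intro z
    have h1 : HasSum (fun j : ℕ => b j * (-z) ^ j) (WeylOp β f (-z)) := hb (-z)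
    have h2 : (fun j : ℕ => b j * (-z) ^ j) = fun j : ℕ => b j * z ^ j := by
      funext j
      rcases Nat.even_or_odd j with hj | hj
      · rw [hj.neg_pow]
      · rw [hbOdd j hj]; ring
    rw [h2] at h1
    exact h1.unique (hb z)
  intro z
  by_contra hz
  rcases eq_or_ne β 0 with hβ | hβ
  · -- β = 0 : f is also even, hence zero
    subst hβ
    have h0 : ∀ w : ℂ, WeylOp 0 f w = f w := by
      intro w; simp [WeylOp]
    have hfe : f (-z) = f z := by rw [← h0, ← h0 z, hEven]
    rw [hOdd z] at hfe
    apply hz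
    have : (2 : ℂ) * f z = 0 := by linear_combination -hfe
    simpa using this
  · -- β ≠ 0
    have key : ∀ w : ℂ, (1 : ℂ) * WeylOp β f w + 1 * WeylOp (-β) f w = 0 := by
      intro w
      have e1 : WeylOp β f w =
          -(Complex.exp (-((‖β‖ : ℂ) ^ 2) / 2 + (starRingEnd ℂ) β * w) * f (w - β)) := by
        rw [← hEven w]
        show Complex.exp (-((‖β‖ : ℂ) ^ 2) / 2 - (starRingEnd ℂ) β * (-w)) * f (-w + β) = _
        have h3 : (-w + β) = -(w - β) := by ring
        have h4 : -((‖β‖ : ℂ) ^ 2) / 2 - (starRingEnd ℂ) β * (-w)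
            = -((‖β‖ : ℂ) ^ 2) / 2 + (starRingEnd ℂ) β * w := by ring
        rw [h3, hOdd, h4]; ring
      have e2 : WeylOp (-β) f w =
          Complex.exp (-((‖β‖ : ℂ) ^ 2) / 2 + (starRingEnd ℂ) β * w) * f (w - β) := by
        show Complex.exp (-((‖-β‖ : ℂ) ^ 2) / 2 - (starRingEnd ℂ) (-β) * w) * f (w + -β) = _
        rw [norm_neg, map_neg]
        have h3 : (w + -β) = w - β := by ring
        have h4 : -((‖β‖ : ℂ) ^ 2) / 2 - -(starRingEnd ℂ) β * w
            = -((‖β‖ : ℂ) ^ 2) / 2 + (starRingEnd ℂ) β * w := by ring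
        rw [h3, h4]
      rw [e1, e2]; ring
    have hne : β ≠ -β := by
      intro h
      apply hβ; have : (2:ℂ) * β = 0 := by linear_combination h
      simpa using this
    obtain ⟨h10, -⟩ := HRT2 f hf ⟨z, hz⟩ β (-β) hne 1 1 key
    exact one_ne_zero h10
end
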